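/- Let B and P be two perfect matchings on the same set of n vertices, n even, n ≥ 4. Then there exist at least (n−3)!! perfect matchings Q on this vertex set such that both edge-disjoint unions Q ∪ B and P ∪ Q are Hamiltonian cycles. -/

import Mathlib

abbrev Edges (n : ℕ) : Type := Multiset (Sym2 (Fin n))

/-- Degree of a vertex in a loopless multigraph given by an edge multiset. -/
def edeg {n : ℕ} (E : Edges n) (v : Fin n) : ℕ :=
  Multiset.card (E.filter (fun e => v ∈ e))

/-- The multigraph has no loops. -/
def Loopless {n : ℕ} (E : Edges n) : Prop := ∀ e ∈ E, ¬ e.IsDiag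

/-- A perfect matching: a loopless 1-regular multigraph on all vertices. -/
def IsPM {n : ℕ} (E : Edges n) : Prop :=
  Loopless E ∧ ∀ v, edeg E v = 1

/-- Adjacency in the multigraph. -/
def EAdj {n : ℕ} (E : Edges n) (u v : Fin n) : Prop :=
  u ≠ v ∧ s(u, v) ∈ E

/-- A Hamiltonian cycle: a connected, loopless, 2-regular multigraph on all vertices. -/
def IsHam {n : ℕ} (E : Edges n) : Prop :=
  Loopless E ∧ (∀ v, edeg E v = 2) ∧
    ∀ u v : Fin n, Relation.ReflTransGen (EAdj E) u v

/-- A 2-regular loopless multigraph (a disjoint union of cycles). -/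
def TwoRegular {n : ℕ} (E : Edges n) : Prop :=
  Loopless E ∧ ∀ v, edeg E v = 2

/-- Every connected component (cycle) has an even number of vertices,
i.e. all cycles have even length. -/
def EvenCycles {n : ℕ} (E : Edges n) : Prop :=
  ∀ v : Fin n, Even (Set.ncard {u | Relation.ReflTransGen (EAdj E) v u})

/-- `C` is a compatible cycle for `G`: a Hamiltonian cycle such that the edge-disjoint
union `G ∪ C` decomposes into two edge-disjoint Hamiltonian cycles. -/
def Compatible {n : ℕ} (G C : Edges n) : Prop :=
  IsHam C ∧ ∃ C₁ C₂ : Edges n, IsHam C₁ ∧ IsHam C₂ ∧ G + C = C₁ + C₂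

/-!
Induct on the vertex set `s`; for `|s| ≤ 2` the matching `B` itself is a common completion.
Otherwise fix `x ∈ s` with `B`-partner `b` and `P`-partner `p`. For each of the at least `|s| - 3`
vertices `q ∉ {x, b, p}`, delete `x` and `q`, replacing the `B`-edges `xb, qw` by `bw` and the
`P`-edges `xp, qr` by `pr`. Every common completion `Q'` of the two contracted matchings yields the
common completion `Q' + xq` of `B` and `P`, since subdividing `bw` into `b x q w` (and `pr` into
`p x q r`) keeps a Hamiltonian cycle Hamiltonian. Completions obtained from different `q` differ in
the partner of `x`, so there are at least `(|s| - 3) (|s| - 5)‼ = (|s| - 3)‼` of them.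
-/

section

variable {n : ℕ}

lemma edeg_add (E F : Edges n) : edeg (E + F) = edeg E + edeg F := by
  funext v
  simp [edeg, Multiset.filter_add]

lemma edeg_cons (e : Sym2 (Fin n)) (E : Edges n) : edeg (e ::ₘ E) = edeg {e} + edeg E := by
  rw [← Multiset.singleton_add, edeg_add]

lemma edeg_pair {a c : Fin n} (hac : a ≠ c) :
    edeg {s(a, c)} = Pi.single a 1 + Pi.single c 1 := by
  funext v
  by_cases hva : v = a <;> by_cases hvc : v = c <;>
    simp_all [edeg, Multiset.filter_singleton]

lemma pos_edeg_of_mem {E : Edges n} {e : Sym2 (Fin n)} (he : e ∈ E) {v : Fin n} (hv : v ∈ e) :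
    0 < edeg E v :=
  Multiset.card_pos_iff_exists_mem.mpr ⟨e, Multiset.mem_filter.mpr ⟨he, hv⟩⟩

lemma count_le_edeg (E : Edges n) {e : Sym2 (Fin n)} {v : Fin n} (hv : v ∈ e) :
    E.count e ≤ edeg E v := by
  rw [edeg, ← Multiset.count_filter_of_pos (p := fun e => v ∈ e) hv]
  exact Multiset.count_le_card _ _

lemma mem_of_edeg_eq_indicator {s : Finset (Fin n)} {f : Fin n → ℕ} {E : Edges n}
    (h : edeg E = (s : Set (Fin n)).indicator f) {e : Sym2 (Fin n)} (he : e ∈ E) {v : Fin n}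
    (hv : v ∈ e) : v ∈ s := by
  by_contra hvs
  have := pos_edeg_of_mem he hv
  rw [h, Set.indicator_of_notMem (by simpa using hvs)] at this
  exact this.false

lemma indicator_eq_indicator_sdiff_add {M : Type*} [AddCommMonoid M] {s : Finset (Fin n)}
    {x q : Fin n} (hx : x ∈ s) (hq : q ∈ s) (hxq : x ≠ q) (f : Fin n → M) :
    (s : Set (Fin n)).indicator f =
      ((s \ {x, q} : Finset (Fin n)) : Set (Fin n)).indicator f + Pi.single x (f x) +
        Pi.single q (f q) := by
  funext v
  by_cases hvx : v = x <;> by_cases hvq : v = q <;>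
    simp_all [Set.indicator_apply]

lemma Loopless.ne {E : Edges n} (h : Loopless E) {u v : Fin n} (huv : s(u, v) ∈ E) : u ≠ v :=
  fun h' => h _ huv (Sym2.mk_isDiag_iff.mpr h')

lemma Loopless.add {E F : Edges n} (hE : Loopless E) (hF : Loopless F) : Loopless (E + F) := by
  intro e he
  rcases Multiset.mem_add.mp he with he | he
  exacts [hE e he, hF e he]

lemma Loopless.cons {E : Edges n} (hE : Loopless E) {u v : Fin n} (huv : u ≠ v) :
    Loopless (s(u, v) ::ₘ E) := by
  intro e he
  rcases Multiset.mem_cons.mp he with rfl | he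
  exacts [by simpa using huv, hE e he]

lemma Loopless.of_cons {E : Edges n} {e : Sym2 (Fin n)} (h : Loopless (e ::ₘ E)) : Loopless E :=
  fun f hf => h f (Multiset.mem_cons_of_mem hf)

instance (E : Edges n) : Std.Symm (EAdj E) where
  symm _ _ h := ⟨h.1.symm, Sym2.eq_swap ▸ h.2⟩

def IsPMOn (s : Finset (Fin n)) (E : Edges n) : Prop :=
  Loopless E ∧ edeg E = (s : Set (Fin n)).indicator 1

def IsHamOn (s : Finset (Fin n)) (E : Edges n) : Prop :=
  Loopless E ∧ edeg E = (s : Set (Fin n)).indicator 2 ∧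
    ∀ u ∈ s, ∀ v ∈ s, Relation.ReflTransGen (EAdj E) u v

namespace IsPMOn

variable {s : Finset (Fin n)} {E : Edges n}

lemma mem (h : IsPMOn s E) {e : Sym2 (Fin n)} (he : e ∈ E) {v : Fin n} (hv : v ∈ e) : v ∈ s :=
  mem_of_edeg_eq_indicator h.2 he hv

lemma edeg_le_one (h : IsPMOn s E) (v : Fin n) : edeg E v ≤ 1 := by
  rw [h.2, Set.indicator_apply]
  split_ifs <;> simp

lemma exists_mem (h : IsPMOn s E) {v : Fin n} (hv : v ∈ s) : ∃ w, s(v, w) ∈ E := by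
  have hpos : 0 < edeg E v := by simp [h.2, hv]
  obtain ⟨e, he⟩ := Multiset.card_pos_iff_exists_mem.mp hpos
  obtain ⟨heE, hve⟩ := Multiset.mem_filter.mp he
  obtain ⟨w, rfl⟩ := Sym2.mem_iff_exists.mp hve
  exact ⟨w, heE⟩

lemma eq_of_mem (h : IsPMOn s E) {v a c : Fin n} (ha : s(v, a) ∈ E) (hc : s(v, c) ∈ E) :
    a = c := by
  by_contra hac
  have hsub : ({s(v, a), s(v, c)} : Finset (Sym2 (Fin n))) ⊆
      (E.filter (fun e => v ∈ e)).toFinset := by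
    intro e he
    rcases Finset.mem_insert.mp he with rfl | he
    · simp [ha]
    · simp [Finset.mem_singleton.mp he, hc]
  have := (Finset.card_le_card hsub).trans (Multiset.toFinset_card_le _)
  rw [Finset.card_pair fun h => hac (Sym2.congr_right.mp h)] at this
  exact absurd (h.edeg_le_one v) (by unfold edeg; omega)

lemma setOf_finite (s : Finset (Fin n)) : {E : Edges n | IsPMOn s E}.Finite := by
  refine (Multiset.finite_toSet (Finset.univ : Finset (Sym2 (Fin n))).val.powerset).subset ?_
  intro E hE
  simp only [Set.mem_ofPred_eq, Multiset.mem_powerset, Multiset.le_iff_count]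
  intro e
  induction e using Sym2.ind with
  | _ a b =>
    rw [Multiset.count_eq_one_of_mem Finset.univ.nodup (Finset.mem_univ _)]
    exact (count_le_edeg E (Sym2.mem_mk_left a b)).trans (hE.edeg_le_one a)

lemma exists_eq_cons_cons (h : IsPMOn s E) {x q : Fin n} (hx : x ∈ s) (hq : q ∈ s)
    (hxq : x ≠ q) (hxqE : s(x, q) ∉ E) : ∃ b w R, E = s(x, b) ::ₘ s(q, w) ::ₘ R := by
  obtain ⟨b, hb⟩ := h.exists_mem hx
  obtain ⟨w, hw⟩ := h.exists_mem hq
  have hne : s(q, w) ≠ s(x, b) := by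
    intro heq
    rcases Sym2.eq_iff.mp heq with ⟨h1, -⟩ | ⟨h1, rfl⟩
    exacts [hxq h1.symm, hxqE (h1 ▸ hb)]
  refine ⟨b, w, (E.erase s(x, b)).erase s(q, w), ?_⟩
  rw [Multiset.cons_erase ((Multiset.mem_erase_of_ne hne).mpr hw), Multiset.cons_erase hb]

lemma contract {x b q w : Fin n} {R : Edges n} (h : IsPMOn s (s(x, b) ::ₘ s(q, w) ::ₘ R))
    (hxq : x ≠ q) : IsPMOn (s \ {x, q}) (s(b, w) ::ₘ R) := by
  have hxb : x ≠ b := h.1.ne (by simp)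
  have hqw : q ≠ w := h.1.ne (by simp)
  have hbw : b ≠ w := by
    rintro rfl
    exact hxq (h.eq_of_mem (v := b) (by simp [Sym2.eq_swap]) (by simp [Sym2.eq_swap]))
  have hx : x ∈ s := h.mem (by simp : s(x, b) ∈ _) (Sym2.mem_mk_left x b)
  have hq : q ∈ s := h.mem (by simp : s(q, w) ∈ _) (Sym2.mem_mk_left q w)
  refine ⟨h.1.of_cons.of_cons.cons hbw, add_right_cancel (b := Pi.single x 1 + Pi.single q 1) ?_⟩
  calc _ = edeg (s(x, b) ::ₘ s(q, w) ::ₘ R) := by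
        simp only [edeg_cons, edeg_pair hxb, edeg_pair hqw, edeg_pair hbw]; abel
    _ = _ := by
        rw [h.2, indicator_eq_indicator_sdiff_add hx hq hxq]
        simp only [Pi.one_apply]; abel

lemma cons {x q : Fin n} (h : IsPMOn (s \ {x, q}) E) (hx : x ∈ s) (hq : q ∈ s) (hxq : x ≠ q) :
    IsPMOn s (s(x, q) ::ₘ E) := by
  refine ⟨h.1.cons hxq, ?_⟩
  rw [edeg_cons, edeg_pair hxq, h.2, indicator_eq_indicator_sdiff_add hx hq hxq]
  simp only [Pi.one_apply]; abel

end IsPMOn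

lemma IsPMOn.isHamOn_add_of_card_le_two {s : Finset (Fin n)} {E F : Edges n}
    (hs : s.card ≤ 2) (hE : IsPMOn s E) (hF : IsPMOn s F) : IsHamOn s (E + F) := by
  refine ⟨hE.1.add hF.1, ?_, ?_⟩
  · rw [edeg_add, hE.2, hF.2, ← Set.indicator_add', one_add_one_eq_two]
  · intro u hu v hv
    obtain rfl | huv := eq_or_ne u v
    · rfl
    obtain ⟨w, hw⟩ := hE.exists_mem hu
    obtain rfl : w = v := by
      by_contra hwv
      have := Finset.two_lt_card.mpr
        ⟨u, hu, v, hv, w, hE.mem hw (Sym2.mem_mk_right u w), huv, hE.1.ne hw, Ne.symm hwv⟩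
      omega
    exact .single ⟨huv, Multiset.mem_add.mpr (.inl hw)⟩

namespace IsHamOn

variable {s : Finset (Fin n)} {E : Edges n}

lemma mem (h : IsHamOn s E) {e : Sym2 (Fin n)} (he : e ∈ E) {v : Fin n} (hv : v ∈ e) : v ∈ s :=
  mem_of_edeg_eq_indicator h.2.1 he hv

lemma subdivide {x q u v : Fin n} {R : Edges n} (h : IsHamOn (s \ {x, q}) (s(u, v) ::ₘ R))
    (hx : x ∈ s) (hq : q ∈ s) (hxq : x ≠ q) :
    IsHamOn s (s(x, u) ::ₘ s(q, v) ::ₘ s(x, q) ::ₘ R) := by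
  have hu := h.mem (Multiset.mem_cons_self _ _) (Sym2.mem_mk_left u v)
  have hv := h.mem (Multiset.mem_cons_self _ _) (Sym2.mem_mk_right u v)
  simp only [Finset.mem_sdiff, Finset.mem_insert, Finset.mem_singleton, not_or] at hu hv
  have huv : u ≠ v := h.1.ne (Multiset.mem_cons_self _ _)
  set E := s(x, u) ::ₘ s(q, v) ::ₘ s(x, q) ::ₘ R
  have hxu : EAdj E x u := ⟨Ne.symm hu.2.1, by simp [E]⟩
  have hqv : EAdj E q v := ⟨Ne.symm hv.2.2, by simp [E]⟩
  have hxq' : EAdj E x q := ⟨hxq, by simp [E]⟩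
  refine ⟨(((h.1.of_cons).cons hxq).cons hqv.1).cons hxu.1, ?_, ?_⟩
  · calc
      edeg E = edeg (s(u, v) ::ₘ R) + (Pi.single x 1 + Pi.single x 1) +
          (Pi.single q 1 + Pi.single q 1) := by
        simp only [E, edeg_cons, edeg_pair hxu.1, edeg_pair hqv.1, edeg_pair hxq, edeg_pair huv]
        abel
      _ = _ := by
        rw [h.2.1, indicator_eq_indicator_sdiff_add hx hq hxq, ← Pi.single_add, ← Pi.single_add]
        rfl
  · have old_adj (a c : Fin n) (hac : EAdj (s(u, v) ::ₘ R) a c) :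
        Relation.ReflTransGen (EAdj E) a c := by
      rcases Multiset.mem_cons.mp hac.2 with heq | hR
      · have huv' : Relation.ReflTransGen (EAdj E) u v :=
          ((Relation.ReflTransGen.single (Std.Symm.symm _ _ hxu)).tail hxq').tail hqv
        rcases Sym2.eq_iff.mp heq with ⟨rfl, rfl⟩ | ⟨rfl, rfl⟩
        exacts [huv', Std.Symm.symm _ _ huv']
      · exact .single ⟨hac.1, by simp [E, hR]⟩
    have reach_x (w : Fin n) (hw : w ∈ s) : Relation.ReflTransGen (EAdj E) w x := by
      by_cases hw' : w ∈ s \ {x, q}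
      · exact (Relation.ReflTransGen.lift' id old_adj _ _
          (h.2.2 w hw' u (by simp [hu]))).tail (Std.Symm.symm _ _ hxu)
      · obtain rfl | rfl : w = x ∨ w = q := or_iff_not_imp_left.mpr (by simpa [hw] using hw')
        exacts [.refl, .single (Std.Symm.symm _ _ hxq')]
    intro a ha c hc
    exact (reach_x a ha).trans (Std.Symm.symm _ _ (reach_x c hc))

end IsHamOn

def commonCompletions (s : Finset (Fin n)) (B P : Edges n) : Set (Edges n) :=
  {Q | IsPMOn s Q ∧ IsHamOn s (Q + B) ∧ IsHamOn s (P + Q)}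

lemma commonCompletions_finite (s : Finset (Fin n)) (B P : Edges n) :
    (commonCompletions s B P).Finite :=
  (IsPMOn.setOf_finite s).subset fun _ hQ => hQ.1

lemma cons_mem_commonCompletions {s : Finset (Fin n)} {x q b w p r : Fin n} {RB RP Q : Edges n}
    (hQ : Q ∈ commonCompletions (s \ {x, q}) (s(b, w) ::ₘ RB) (s(p, r) ::ₘ RP))
    (hx : x ∈ s) (hq : q ∈ s) (hxq : x ≠ q) :
    s(x, q) ::ₘ Q ∈
      commonCompletions s (s(x, b) ::ₘ s(q, w) ::ₘ RB) (s(x, p) ::ₘ s(q, r) ::ₘ RP) := by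
  obtain ⟨hQ, hQB, hPQ⟩ := hQ
  rw [Multiset.add_cons] at hQB
  rw [Multiset.cons_add] at hPQ
  refine ⟨hQ.cons hx hq hxq, ?_, ?_⟩
  · convert hQB.subdivide hx hq hxq using 1
    simp only [Multiset.cons_add, Multiset.add_cons]
  · convert hPQ.subdivide hx hq hxq using 1
    simp only [Multiset.cons_add, Multiset.add_cons]
    rw [Multiset.cons_swap s(x, q) s(x, p), Multiset.cons_swap s(x, q) s(q, r)]

lemma exists_ncard_commonCompletions_sdiff_le {s : Finset (Fin n)} {B P : Edges n}
    (hB : IsPMOn s B) (hP : IsPMOn s P) {x q : Fin n} (hx : x ∈ s) (hq : q ∈ s) (hxq : x ≠ q)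
    (hxqB : s(x, q) ∉ B) (hxqP : s(x, q) ∉ P) :
    ∃ B' P', IsPMOn (s \ {x, q}) B' ∧ IsPMOn (s \ {x, q}) P' ∧
      (commonCompletions (s \ {x, q}) B' P').ncard ≤
        {Q ∈ commonCompletions s B P | s(x, q) ∈ Q}.ncard := by
  obtain ⟨b, w, RB, rfl⟩ := hB.exists_eq_cons_cons hx hq hxq hxqB
  obtain ⟨p, r, RP, rfl⟩ := hP.exists_eq_cons_cons hx hq hxq hxqP
  refine ⟨_, _, hB.contract hxq, hP.contract hxq, ?_⟩
  rw [← Set.ncard_image_of_injective _ fun _ _ => (Multiset.cons_inj_right (s(x, q))).mp]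
  refine Set.ncard_le_ncard ?_ ((commonCompletions_finite _ _ _).subset (Set.sep_subset _ _))
  rintro _ ⟨Q, hQ, rfl⟩
  exact ⟨cons_mem_commonCompletions hQ hx hq hxq, Multiset.mem_cons_self _ _⟩

lemma Finset.card_mul_le_ncard_of_pairwiseDisjoint {ι α : Type*} {T : Set α} (hT : T.Finite)
    {S : Finset ι} {F : ι → Set α} (hFT : ∀ i ∈ S, F i ⊆ T) (hF : (S : Set ι).PairwiseDisjoint F)
    {m : ℕ} (hm : ∀ i ∈ S, m ≤ (F i).ncard) : S.card * m ≤ T.ncard :=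
  calc S.card * m = ∑ i ∈ S, m := by rw [Finset.sum_const, smul_eq_mul]
    _ ≤ ∑ i ∈ S, (F i).ncard := Finset.sum_le_sum hm
    _ = (⋃ i ∈ (S : Set ι), F i).ncard := by
        rw [S.finite_toSet.ncard_biUnion (fun i hi => hT.subset (hFT i hi)) hF,
          finsum_mem_coe_finset]
    _ ≤ T.ncard := Set.ncard_le_ncard (Set.iUnion₂_subset hFT) hT

open scoped Nat in
theorem doubleFactorial_le_ncard_commonCompletions {s : Finset (Fin n)} (hs : Even s.card)
    {B P : Edges n} (hB : IsPMOn s B) (hP : IsPMOn s P) :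
    (s.card - 3)‼ ≤ (commonCompletions s B P).ncard := by
  induction s using Finset.strongInduction generalizing B P with
  | H s ih =>
  obtain hs2 | hs4 : s.card ≤ 2 ∨ 4 ≤ s.card := by obtain ⟨k, hk⟩ := hs; omega
  · have hBmem : B ∈ commonCompletions s B P :=
      ⟨hB, hB.isHamOn_add_of_card_le_two hs2 hB, hP.isHamOn_add_of_card_le_two hs2 hB⟩
    rw [show s.card - 3 = 0 by omega]
    exact (Set.ncard_pos (commonCompletions_finite s B P)).mpr ⟨B, hBmem⟩
  obtain ⟨x, hx⟩ : s.Nonempty := by rw [← Finset.card_pos]; omega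
  obtain ⟨b, hb⟩ := hB.exists_mem hx
  obtain ⟨p, hp⟩ := hP.exists_mem hx
  have fiber (q : Fin n) (hq : q ∈ s \ {x, b, p}) :
      (s.card - 5)‼ ≤ {Q ∈ commonCompletions s B P | s(x, q) ∈ Q}.ncard := by
    simp only [Finset.mem_sdiff, Finset.mem_insert, Finset.mem_singleton, not_or] at hq
    obtain ⟨hqs, hqx, hqb, hqp⟩ := hq
    obtain ⟨B', P', hB', hP', hle⟩ := exists_ncard_commonCompletions_sdiff_le hB hP hx hqs
      (Ne.symm hqx) (fun h => hqb (hB.eq_of_mem h hb)) (fun h => hqp (hP.eq_of_mem h hp))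
    have hsub : {x, q} ⊆ s := Finset.insert_subset hx (Finset.singleton_subset_iff.mpr hqs)
    have hcard : (s \ {x, q}).card = s.card - 2 := by
      rw [Finset.card_sdiff_of_subset hsub, Finset.card_pair (Ne.symm hqx)]
    calc (s.card - 5)‼ = ((s \ {x, q}).card - 3)‼ := by rw [hcard, Nat.sub_sub]
      _ ≤ _ := ih _ (Finset.sdiff_ssubset hsub (Finset.insert_nonempty _ _))
          (by rw [hcard]; obtain ⟨k, hk⟩ := hs; exact ⟨k - 1, by omega⟩) hB' hP'
      _ ≤ _ := hle
  have hdisj : ((s \ {x, b, p} : Finset (Fin n)) : Set (Fin n)).PairwiseDisjoint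
      fun q => {Q ∈ commonCompletions s B P | s(x, q) ∈ Q} :=
    fun q₁ _ q₂ _ hne => Set.disjoint_left.mpr fun _ h₁ h₂ => hne (h₁.1.1.eq_of_mem h₁.2 h₂.2)
  calc (s.card - 3)‼ = (s.card - 3) * (s.card - 5)‼ := by
        rw [show s.card - 3 = s.card - 4 + 1 by omega, Nat.doubleFactorial_add_one]; rfl
    _ ≤ (s \ {x, b, p}).card * (s.card - 5)‼ := by
        gcongr
        have := Finset.le_card_sdiff {x, b, p} s
        have := Finset.card_le_three (a := x) (b := b) (c := p)
        omega
    _ ≤ _ := Finset.card_mul_le_ncard_of_pairwiseDisjoint (commonCompletions_finite s B P)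
        (fun _ _ => Set.sep_subset _ _) hdisj fiber

lemma isPMOn_univ_iff (E : Edges n) : IsPMOn Finset.univ E ↔ IsPM E := by
  simp [IsPM, IsPMOn, funext_iff]

lemma isHamOn_univ_iff (E : Edges n) : IsHamOn Finset.univ E ↔ IsHam E := by
  simp [IsHam, IsHamOn, funext_iff]

end

open Nat in
theorem lower_bound_common_completions_general (n : ℕ) (hne : Even n)
    (B P : Edges n) (hB : IsPM B) (hP : IsPM P) :
    Nat.doubleFactorial (n - 3) ≤
      Set.ncard {Q : Edges n | IsPM Q ∧ IsHam (Q + B) ∧ IsHam (P + Q)} := by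
  have hcompl :
      commonCompletions Finset.univ B P = {Q | IsPM Q ∧ IsHam (Q + B) ∧ IsHam (P + Q)} := by
    simp only [commonCompletions, isPMOn_univ_iff, isHamOn_univ_iff]
  have := doubleFactorial_le_ncard_commonCompletions (by simpa using hne)
    ((isPMOn_univ_iff B).mpr hB) ((isPMOn_univ_iff P).mpr hP)
  rwa [Finset.card_univ, Fintype.card_fin, hcompl] at this

open Nat in
theorem lower_bound_common_completions (n : ℕ) (hn : 4 ≤ n) (hne : Even n)
    (B P : Edges n) (hB : IsPM B) (hP : IsPM P) :
    Nat.doubleFactorial (n - 3) ≤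
      Set.ncard {Q : Edges n | IsPM Q ∧ IsHam (Q + B) ∧ IsHam (P + Q)} :=
  lower_bound_common_completions_general n hne B P hB hP
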